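/- arXiv:2205.13321 — 3 statements merged into one kernel-verified Lean document; each statement's English description precedes it below -/
import Mathlib

section
/- For integers N ≥ 1, n with 0 ≤ n ≤ N-1, and m = lN + j with l ≥ 1 odd and 0 ≤ j ≤ N-1, the sum S = (1/2)·1 + Σ_{k=1}^{N-1} cos(kπ(2m+1)/(2N))·cos(kπ(2n+1)/(2N)) equals N/2 if j = N-1-n and equals 0 otherwise. -/
/-!
By the product-to-sum formula, `S = (C (m + n + 1) + C (m - n)) / 2 - 1 / 2`, where
`C a = ∑_{k<N} cos (k π a / N)` is the real part of a geometric series in `exp (i π a / N)`.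
Hence `C a = N` when `2N ∣ a`, and otherwise `C a` is `0` or `1` according to the parity of `a`.
Since `(m + n + 1) + (m - n)` is odd, exactly one of the two arguments is odd. With `l` odd,
`2N` divides `m + n + 1` exactly when `j = N - 1 - n`, and it never divides `m - n`.
-/

open Real Finset

lemma Complex.re_neg_two_div_sub_one {z : ℂ} (hz : ‖z‖ = 1) (h1 : z ≠ 1) :
    (-2 / (z - 1)).re = 1 := by
  have hsq : Complex.normSq (z - 1) = 2 * (1 - z.re) := by
    have hz2 : z.re * z.re + z.im * z.im = 1 := by
      rw [← Complex.normSq_apply, Complex.normSq_eq_norm_sq, hz, one_pow]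
    rw [Complex.normSq_apply]
    simp only [Complex.sub_re, Complex.one_re, Complex.sub_im, Complex.one_im, sub_zero]
    linarith
  have hre : 1 - z.re ≠ 0 := by
    have : Complex.normSq (z - 1) ≠ 0 := by simpa [sub_eq_zero] using h1
    rw [hsq] at this
    exact right_ne_zero_of_mul this
  rw [Complex.div_re, hsq]
  simp only [Complex.neg_re, Complex.neg_im, Complex.re_ofNat, Complex.im_ofNat, Complex.sub_re,
    Complex.one_re]
  field_simp
  ring

lemma sum_range_cos_nat_mul (N : ℕ) (θ : ℝ) :
    ∑ k ∈ range N, cos (k * θ) = (∑ k ∈ range N, Complex.exp (θ * Complex.I) ^ k).re := by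
  rw [Complex.re_sum]
  refine sum_congr rfl fun k _ => ?_
  rw [← Complex.exp_nat_mul, ← mul_assoc, ← Complex.ofReal_natCast, ← Complex.ofReal_mul,
    Complex.exp_ofReal_mul_I_re]

lemma sum_range_cos_mul_pi_div_of_dvd {N : ℕ} {a : ℤ} (ha : 2 * (N : ℤ) ∣ a) :
    ∑ k ∈ range N, cos (k * π * a / N) = N := by
  obtain ⟨t, rfl⟩ := ha
  rcases eq_or_ne N 0 with rfl | hN
  · simp
  have hterm (k : ℕ) : cos (k * π * ((2 * N * t : ℤ) : ℝ) / N) = 1 := by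
    rw [← cos_int_mul_two_pi (k * t)]
    congr 1
    push_cast
    field_simp
  rw [sum_congr rfl fun k _ => hterm k]
  simp

lemma sum_range_cos_mul_pi_div_of_not_dvd {N : ℕ} (hN : N ≠ 0) {a : ℤ}
    (ha : ¬ 2 * (N : ℤ) ∣ a) :
    ∑ k ∈ range N, cos (k * π * a / N) = if Even a then 0 else 1 := by
  set θ : ℝ := π * a / N with hθ
  set z := Complex.exp (θ * Complex.I)
  have hz1 : z ≠ 1 := by
    rw [Ne, Complex.exp_eq_one_iff]
    rintro ⟨t, ht⟩
    refine ha ⟨t, ?_⟩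
    have : θ = t * (2 * π) := by
      apply Complex.ofReal_injective
      push_cast
      exact mul_right_cancel₀ Complex.I_ne_zero (ht.trans (by ring))
    rw [hθ] at this
    field_simp at this
    exact_mod_cast (by linarith [this] : (a : ℝ) = 2 * N * t)
  have hzN : z ^ N = (-1) ^ a := by
    rw [← Complex.exp_nat_mul, ← Complex.exp_pi_mul_I, ← Complex.exp_int_mul, hθ]
    congr 1
    push_cast
    field_simp
  have hangle (k : ℕ) : (k : ℝ) * π * a / N = k * θ := by ring
  simp_rw [hangle]
  rw [sum_range_cos_nat_mul, geom_sum_eq hz1, hzN]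
  split_ifs with hev
  · simp [hev.neg_one_zpow]
  · rw [(Int.not_even_iff_odd.mp hev).neg_one_zpow, show (-1 - 1 : ℂ) = -2 by norm_num]
    exact Complex.re_neg_two_div_sub_one (Complex.norm_exp_ofReal_mul_I _) hz1

lemma sum_Icc_one_pred_eq_sum_range_sub {M : Type*} [AddCommGroup M] {N : ℕ} (hN : N ≠ 0)
    (f : ℕ → M) : ∑ k ∈ Icc 1 (N - 1), f k = ∑ k ∈ range N, f k - f 0 := by
  rw [sum_range_eq_add_Ico f (Nat.pos_of_ne_zero hN), ← Ico_add_one_right_eq_Icc,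
    Nat.sub_add_cancel (Nat.one_le_iff_ne_zero.mpr hN)]
  abel

lemma half_add_sum_Icc_cos_mul_cos {N : ℕ} (hN : N ≠ 0) (x y : ℝ) :
    1 / 2 + ∑ k ∈ Icc 1 (N - 1),
        cos (k * π * (2 * x + 1) / (2 * N)) * cos (k * π * (2 * y + 1) / (2 * N))
      = (∑ k ∈ range N, cos (k * π * (x + y + 1) / N)
          + ∑ k ∈ range N, cos (k * π * (x - y) / N)) / 2 - 1 / 2 := by
  have hterm (k : ℕ) : cos (k * π * (2 * x + 1) / (2 * N)) * cos (k * π * (2 * y + 1) / (2 * N))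
      = (cos (k * π * (x + y + 1) / N) + cos (k * π * (x - y) / N)) / 2 := by
    rw [eq_div_iff two_ne_zero, mul_comm, ← mul_assoc, two_mul_cos_mul_cos, add_comm]
    congr 2 <;> field_simp <;> ring
  rw [sum_Icc_one_pred_eq_sum_range_sub hN, sum_congr rfl fun k _ => hterm k, ← sum_add_distrib,
    ← sum_div]
  simp only [CharP.cast_eq_zero, zero_mul, zero_div, cos_zero, mul_one]
  ring

lemma sum_range_cos_mul_pi_div_add_of_odd {N : ℕ} (hN : N ≠ 0) {a b : ℤ} (hab : Odd (a + b))
    (ha : ¬ 2 * (N : ℤ) ∣ a) (hb : ¬ 2 * (N : ℤ) ∣ b) :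
    ∑ k ∈ range N, cos (k * π * a / N) + ∑ k ∈ range N, cos (k * π * b / N) = 1 := by
  rw [sum_range_cos_mul_pi_div_of_not_dvd hN ha, sum_range_cos_mul_pi_div_of_not_dvd hN hb]
  rcases Int.even_or_odd a with hae | hao
  · rw [if_pos hae, if_neg (Int.not_even_iff_odd.mpr ((Int.odd_add'.mp hab).mpr hae)), zero_add]
  · rw [if_neg (Int.not_even_iff_odd.mpr hao), if_pos ((Int.odd_add.mp hab).mp hao), add_zero]

lemma Int.dvd_mul_add_iff_of_lt_two_mul {d c s : ℤ} (hs : 0 < s) (hsd : s < 2 * d) :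
    d ∣ d * c + s ↔ s = d := by
  rw [dvd_add_right (dvd_mul_right d c)]
  refine ⟨fun ⟨t, ht⟩ => ?_, fun h => h ▸ dvd_rfl⟩
  subst ht
  obtain rfl : t = 1 := by nlinarith
  exact mul_one d

theorem stmt1_general (N n l j m : ℕ) (hN : 1 ≤ N) (hn : n ≤ N - 1) (hlo : Odd l)
    (hj : j ≤ N - 1) (hm : m = l * N + j) :
    ((1 : ℝ) / 2 +
      ∑ k ∈ Finset.Icc 1 (N - 1),
        Real.cos (k * π * (2 * m + 1) / (2 * N)) * Real.cos (k * π * (2 * n + 1) / (2 * N)))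
      = if j = N - 1 - n then (N : ℝ) / 2 else 0 := by
  have hN0 : N ≠ 0 := by omega
  obtain ⟨c, rfl⟩ := hlo
  have hmZ : (m : ℤ) = 2 * N * c + N + j := by rw [hm]; push_cast; ring
  have ha : 2 * (N : ℤ) ∣ m + n + 1 ↔ j = N - 1 - n := by
    rw [show (m : ℤ) + n + 1 = 2 * N * c + (N + j + n + 1) by rw [hmZ]; ring,
      Int.dvd_mul_add_iff_of_lt_two_mul (by omega) (by omega)]
    omega
  have hb : ¬ 2 * (N : ℤ) ∣ m - n := by
    rw [show (m : ℤ) - n = 2 * N * c + (N + j - n) by rw [hmZ]; ring,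
      Int.dvd_mul_add_iff_of_lt_two_mul (by omega) (by omega)]
    omega
  have hab : Odd ((m + n + 1 : ℤ) + (m - n)) := ⟨m, by ring⟩
  rw [half_add_sum_Icc_cos_mul_cos hN0,
    show (m : ℝ) + n + 1 = ((m + n + 1 : ℤ) : ℝ) by push_cast; ring,
    show (m : ℝ) - n = ((m - n : ℤ) : ℝ) by push_cast; ring]
  split_ifs with hjn
  · have hbo : Odd ((m : ℤ) - n) :=
      (Int.odd_add'.mp hab).mpr (even_iff_two_dvd.mpr ((dvd_mul_right 2 _).trans (ha.mpr hjn)))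
    rw [sum_range_cos_mul_pi_div_of_dvd (ha.mpr hjn), sum_range_cos_mul_pi_div_of_not_dvd hN0 hb,
      if_neg (Int.not_even_iff_odd.mpr hbo)]
    ring
  · rw [sum_range_cos_mul_pi_div_add_of_odd hN0 hab (mt ha.mp hjn) hb]
    ring

theorem stmt1 (N n l j m : ℕ) (hN : 1 ≤ N) (hn : n ≤ N - 1) (hl : 1 ≤ l) (hlo : Odd l)
    (hj : j ≤ N - 1) (hm : m = l * N + j) :
    ((1 : ℝ) / 2 +
      ∑ k ∈ Finset.Icc 1 (N - 1),
        Real.cos (k * π * (2 * m + 1) / (2 * N)) * Real.cos (k * π * (2 * n + 1) / (2 * N)))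
      = if j = N - 1 - n then (N : ℝ) / 2 else 0 :=
  stmt1_general N n l j m hN hn hlo hj hm
end

section
/- Let X be a random variable taking values in ℕ with PMF p_X, let N ≥ 1, and define the DCT coefficients A_k = (2/N) Σ_{n=0}^{N-1} p_X(n) cos(kπ(2n+1)/(2N)) and the approximate coefficients Â_k = (2/N) Re(ψ_X(kπ/N) e^{ikπ/(2N)}) where ψ_X(u) = E[e^{iuX}] = Σ_{n=0}^{∞} p_X(n) e^{iun}. Define p̂_X(n) = (1/2)Â_0 + Σ_{k=1}^{N-1} Â_k cos(kπ(2n+1)/(2N)). Then for all 0 ≤ n ≤ N-1, the approximation error satisfies p̂_X(n) − p_X(n) = Σ_{l=1}^{∞} (p_X(2lN + n) + p_X(2lN − 1 − n)). -/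
/-!
Absolute convergence of `ψ` gives `Â_k = (2/N) ∑ₘ p(m) cos(kπ(2m+1)/(2N))`, so
`p̂(n) = ∑ₘ p(m) K(m, n)` where `K` is the kernel of the DCT-II followed by its inverse.
By the product-to-sum formula, `K(m, n)` is a combination of the sums
`∑_{k<N} cos(kjπ/N)` for `j = m - n` and `j = m + n + 1`; multiplying such a sum by
`2 sin(jπ/(2N))` telescopes, and since the two values of `j` have opposite parity,
`K(m, n)` is the indicator of `m ≡ n (mod 2N)` plus that of `2N ∣ m + n + 1`.
These `m` are `n` itself and the aliases `2lN + n`, `2lN - 1 - n` with `l ≥ 1`.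
-/

open Real Finset

lemma two_mul_sin_mul_sum_range_cos (x : ℝ) (N : ℕ) :
    2 * sin (x / 2) * ∑ k ∈ range N, cos (k * x) = sin ((2 * N - 1) * x / 2) + sin (x / 2) := by
  induction N with
  | zero => simp [neg_div, sin_neg]
  | succ N ih =>
    rw [sum_range_succ, mul_add, ih, two_mul_sin_mul_cos,
      show x / 2 - N * x = -((2 * N - 1) * x / 2) by ring, sin_neg]
    push_cast
    ring_nf

lemma sum_range_cos_int_mul_pi_div {N : ℕ} (hN : 0 < N) (j : ℤ) :
    ∑ k ∈ range N, cos (k * (j * π / N)) =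
      (if (2 * N : ℤ) ∣ j then (N : ℝ) else 0) + if Odd j then 1 else 0 := by
  have hN' : (N : ℝ) ≠ 0 := by positivity
  by_cases hdvd : (2 * N : ℤ) ∣ j
  · obtain ⟨t, rfl⟩ := hdvd
    have hcos : ∀ k : ℕ, cos (k * (2 * N * t * π / N)) = 1 := fun k => by
      rw [← cos_int_mul_two_pi (k * t)]
      push_cast
      field_simp
    have hnodd : ¬Odd (2 * N * t : ℤ) := by
      rw [Int.not_odd_iff_even, mul_assoc]
      exact even_two_mul _
    simp [hcos, hnodd]
  · have hsin : sin (j * π / N / 2) ≠ 0 := by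
      rw [Ne, sin_eq_zero_iff]
      rintro ⟨t, ht⟩
      field_simp at ht
      have : (j : ℝ) = 2 * N * t := by linarith
      exact hdvd ⟨t, by exact_mod_cast this⟩
    have key := two_mul_sin_mul_sum_range_cos (j * π / N) N
    rw [show (2 * N - 1) * (j * π / N) / 2 = j * π - j * π / N / 2 by field_simp,
      sin_int_mul_pi_sub] at key
    rw [if_neg hdvd, zero_add]
    refine mul_left_cancel₀ hsin ?_
    rcases Int.even_or_odd j with he | ho
    · rw [he.neg_one_zpow] at key
      rw [if_neg (Int.not_odd_iff_even.mpr he)]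
      linear_combination key / 2
    · rw [ho.neg_one_zpow] at key
      rw [if_pos ho]
      linear_combination key / 2

lemma sum_range_eq_add_sum_Icc {M : Type*} [AddCommMonoid M] {N : ℕ} (hN : 0 < N)
    (f : ℕ → M) :
    ∑ k ∈ range N, f k = f 0 + ∑ k ∈ Icc 1 (N - 1), f k := by
  rw [range_eq_Ico, sum_eq_sum_Ico_succ_bot hN]
  congr 1

noncomputable def dctKernel (N m n : ℕ) : ℝ :=
  1 / N + 2 / N * ∑ k ∈ Icc 1 (N - 1),
    cos (k * π * (2 * m + 1) / (2 * N)) * cos (k * π * (2 * n + 1) / (2 * N))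

lemma dctKernel_eq {N : ℕ} (hN : 0 < N) (m n : ℕ) :
    dctKernel N m n =
      (if n ≡ m [MOD 2 * N] then 1 else 0) + if 2 * N ∣ m + n + 1 then 1 else 0 := by
  have hN' : (N : ℝ) ≠ 0 := by positivity
  have hprod : ∀ k : ℕ,
      cos (k * π * (2 * m + 1) / (2 * N)) * cos (k * π * (2 * n + 1) / (2 * N)) =
        (cos (k * ((m - n : ℤ) * π / N)) + cos (k * ((m + n + 1 : ℤ) * π / N))) / 2 := by
    intro k
    rw [eq_div_iff two_ne_zero, mul_comm, ← mul_assoc, two_mul_cos_mul_cos]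
    congr 2 <;> (push_cast; ring)
  have hsum : ∀ j : ℤ, ∑ k ∈ Icc 1 (N - 1), cos (k * (j * π / N)) =
      (if (2 * N : ℤ) ∣ j then (N : ℝ) else 0) + (if Odd j then 1 else 0) - 1 := by
    intro j
    rw [← sum_range_cos_int_mul_pi_div hN, sum_range_eq_add_sum_Icc hN]
    simp
  have hparity : (if Odd (m - n : ℤ) then (1 : ℝ) else 0) +
      (if Odd (m + n + 1 : ℤ) then 1 else 0) = 1 := by
    have hodd : Odd (m + n + 1 : ℤ) ↔ ¬Odd (m - n : ℤ) := by
      rw [show (m : ℤ) + n + 1 = (m - n) + 2 * n + 1 by ring]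
      simp only [parity_simps]
      tauto
    by_cases h : Odd (m - n : ℤ) <;> simp [h, hodd]
  rw [dctKernel, sum_congr rfl fun k _ => hprod k, ← sum_div, sum_add_distrib, hsum, hsum]
  simp only [Nat.modEq_iff_dvd, ← Int.natCast_dvd_natCast (n := m + n + 1)]
  push_cast
  field_simp
  split_ifs at hparity ⊢ <;> linarith

lemma hasSum_re_tsum_mul_exp {p : ℕ → ℝ} (hp : Summable p) (u v : ℝ) :
    HasSum (fun m : ℕ => p m * cos (u * m + v))
      ((∑' m : ℕ, (p m : ℂ) * Complex.exp (Complex.I * u * m)) *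
        Complex.exp (Complex.I * v)).re := by
  have hs : Summable fun m : ℕ => (p m : ℂ) * Complex.exp (Complex.I * u * m) := by
    refine .of_norm_bounded hp.abs fun m => le_of_eq ?_
    rw [norm_mul, Complex.norm_real, Real.norm_eq_abs,
      show Complex.I * u * m = ((u * m : ℝ) : ℂ) * Complex.I by push_cast; ring,
      Complex.norm_exp_ofReal_mul_I, mul_one]
  convert Complex.hasSum_re (hs.hasSum.mul_right (Complex.exp (Complex.I * v))) using 2 with m
  rw [mul_assoc, ← Complex.exp_add,
    show Complex.I * u * m + Complex.I * v = ((u * m + v : ℝ) : ℂ) * Complex.I by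
      push_cast; ring,
    Complex.re_ofReal_mul, Complex.exp_ofReal_mul_I_re]

lemma hasSum_dct_coeff {p : ℕ → ℝ} (hp : Summable p) (N k : ℕ) :
    HasSum (fun m : ℕ => 2 / N * (p m * cos (k * π * (2 * m + 1) / (2 * N))))
      (2 / N * ((∑' m : ℕ, (p m : ℂ) * Complex.exp (Complex.I * (k * π / N : ℝ) * m)) *
        Complex.exp (Complex.I * k * π / (2 * N))).re) := by
  have h := hasSum_re_tsum_mul_exp hp (k * π / N) (k * π / (2 * N))
  rw [show Complex.I * ((k * π / (2 * N) : ℝ) : ℂ) = Complex.I * k * π / (2 * N) by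
    push_cast; ring] at h
  refine (h.congr_fun fun m => ?_).mul_left _
  congr 2
  ring

lemma hasSum_mul_dctKernel {p : ℕ → ℝ} {N : ℕ} {A : ℕ → ℝ}
    (hA : ∀ k : ℕ,
      HasSum (fun m : ℕ => 2 / N * (p m * cos (k * π * (2 * m + 1) / (2 * N)))) (A k))
    (n : ℕ) :
    HasSum (fun m => p m * dctKernel N m n)
      (A 0 / 2 + ∑ k ∈ Icc 1 (N - 1), A k * cos (k * π * (2 * n + 1) / (2 * N))) := by
  refine (((hA 0).div_const 2).add
    (hasSum_sum fun k _ => (hA k).mul_right (cos (k * π * (2 * n + 1) / (2 * N))))).congr_fun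
    fun m => ?_
  simp only [dctKernel, CharP.cast_eq_zero, zero_mul, zero_div, cos_zero, mul_one]
  rw [mul_add, mul_sum, mul_sum]
  congr 1
  · ring
  · exact sum_congr rfl fun k _ => by ring

lemma hasSum_indicator_range {α β γ : Type*} [AddCommGroup α] [UniformSpace α]
    [IsUniformAddGroup α] [CompleteSpace α] {f : β → α} (hf : Summable f) {g : γ → β}
    (hg : g.Injective) : HasSum ((Set.range g).indicator f) (∑' c, f (g c)) := by
  refine (hg.hasSum_iff fun b hb => Set.indicator_of_notMem hb f).mp ?_
  have : (Set.range g).indicator f ∘ g = f ∘ g :=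
    funext fun c => Set.indicator_of_mem (Set.mem_range_self c) f
  exact this ▸ (hf.comp_injective hg).hasSum

lemma setOf_modEq_eq_range {d n : ℕ} (hn : n < d) :
    {m | n ≡ m [MOD d]} = Set.range (d * · + n) := by
  ext m
  refine ⟨fun h => ⟨m / d, ?_⟩, ?_⟩
  · have hmod : m % d = n := by
      rw [← Nat.mod_eq_of_lt hn]
      exact h.symm
    have := Nat.div_add_mod m d
    simp only
    omega
  · rintro ⟨l, rfl⟩
    simp [Nat.ModEq, Nat.mod_eq_of_lt hn]

lemma setOf_dvd_add_add_one_eq_range {d n : ℕ} (hn : n < d) :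
    {m | d ∣ m + n + 1} = Set.range fun l => d * (l + 1) - 1 - n := by
  ext m
  refine ⟨fun ⟨t, ht⟩ => ⟨t - 1, ?_⟩, ?_⟩
  · have ht0 : t ≠ 0 := by rintro rfl; omega
    simp only [Nat.sub_add_cancel (Nat.one_le_iff_ne_zero.mpr ht0)]
    omega
  · rintro ⟨l, rfl⟩
    have : d ≤ d * (l + 1) := Nat.le_mul_of_pos_right d l.succ_pos
    exact ⟨l + 1, by simp only; omega⟩

lemma hasSum_mul_dctKernel_of_lt {p : ℕ → ℝ} (hp : Summable p) {N n : ℕ} (hn : n < N) :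
    HasSum (fun m => p m * dctKernel N m n)
      (p n + ∑' l : ℕ, (p (2 * (l + 1) * N + n) + p (2 * (l + 1) * N - 1 - n))) := by
  simp_rw [show ∀ l : ℕ, 2 * (l + 1) * N = 2 * N * (l + 1) from
    fun l => mul_right_comm _ _ _]
  have h2N : n < 2 * N := by omega
  have hinj₁ : (2 * N * · + n).Injective := fun a b h =>
    Nat.eq_of_mul_eq_mul_left (by omega) (Nat.add_right_cancel h)
  have hinj₂ : (fun l => 2 * N * (l + 1) - 1 - n).Injective := fun a b h => by
    have h' : 2 * N * (a + 1) - 1 - n = 2 * N * (b + 1) - 1 - n := h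
    have ha : 2 * N ≤ 2 * N * (a + 1) := Nat.le_mul_of_pos_right _ a.succ_pos
    have hb : 2 * N ≤ 2 * N * (b + 1) := Nat.le_mul_of_pos_right _ b.succ_pos
    refine Nat.succ_injective (Nat.eq_of_mul_eq_mul_left (by omega : 0 < 2 * N) ?_)
    generalize 2 * N * (a + 1) = x at *
    generalize 2 * N * (b + 1) = y at *
    omega
  have hsum₁ : Summable fun l => p (2 * N * l + n) := hp.comp_injective hinj₁
  have hsum₂ : Summable fun l => p (2 * N * (l + 1) - 1 - n) := hp.comp_injective hinj₂
  have h₁ := hasSum_indicator_range hp hinj₁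
  have h₂ := hasSum_indicator_range hp hinj₂
  rw [← setOf_modEq_eq_range h2N, hsum₁.tsum_eq_zero_add] at h₁
  rw [← setOf_dvd_add_add_one_eq_range h2N] at h₂
  simp only [mul_zero, zero_add] at h₁
  rw [Summable.tsum_add ((summable_nat_add_iff 1).mpr hsum₁) hsum₂, ← add_assoc]
  refine (h₁.add h₂).congr_fun fun m => ?_
  rw [dctKernel_eq (by omega)]
  simp only [Set.indicator_apply, Set.mem_ofPred_eq]
  split_ifs <;> ring

theorem stmt2_general (p : ℕ → ℝ) (hsum : HasSum p 1)
    (N : ℕ) (hN : 1 ≤ N) (n : ℕ) (hn : n ≤ N - 1)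
    (ψ : ℝ → ℂ) (hψ : ∀ u, ψ u = ∑' m : ℕ, (p m : ℂ) * Complex.exp (Complex.I * u * m))
    (A : ℕ → ℝ)
    (hA : ∀ k, A k = (2 / N) * (ψ (k * π / N) * Complex.exp (Complex.I * k * π / (2 * N))).re)
    (phat : ℕ → ℝ)
    (hphat : ∀ m, phat m = A 0 / 2 +
      ∑ k ∈ Finset.Icc 1 (N - 1), A k * Real.cos (k * π * (2 * m + 1) / (2 * N))) :
    phat n - p n = ∑' l : ℕ, (p (2 * (l + 1) * N + n) + p (2 * (l + 1) * N - 1 - n)) := by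
  have hcoef : ∀ k : ℕ,
      HasSum (fun m : ℕ => 2 / N * (p m * cos (k * π * (2 * m + 1) / (2 * N)))) (A k) :=
    fun k => by
      rw [hA, hψ]
      exact hasSum_dct_coeff hsum.summable N k
  have hphat_sum := hasSum_mul_dctKernel hcoef n
  rw [← hphat] at hphat_sum
  rw [hphat_sum.unique (hasSum_mul_dctKernel_of_lt hsum.summable (by omega))]
  ring

theorem stmt2 (p : ℕ → ℝ) (hp : ∀ n, 0 ≤ p n) (hsum : HasSum p 1)
    (N : ℕ) (hN : 1 ≤ N) (n : ℕ) (hn : n ≤ N - 1)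
    (ψ : ℝ → ℂ) (hψ : ∀ u, ψ u = ∑' m : ℕ, (p m : ℂ) * Complex.exp (Complex.I * u * m))
    (A : ℕ → ℝ)
    (hA : ∀ k, A k = (2 / N) * (ψ (k * π / N) * Complex.exp (Complex.I * k * π / (2 * N))).re)
    (phat : ℕ → ℝ)
    (hphat : ∀ m, phat m = A 0 / 2 +
      ∑ k ∈ Finset.Icc 1 (N - 1), A k * Real.cos (k * π * (2 * m + 1) / (2 * N))) :
    phat n - p n = ∑' l : ℕ, (p (2 * (l + 1) * N + n) + p (2 * (l + 1) * N - 1 - n)) :=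
  stmt2_general p hsum N hN n hn ψ hψ A hA phat hphat
end

section
/- Let α, β > 0 with β > α, p(τ) = (β−α)/(β − α e^{(α−β)τ}), g(τ) = β(1−e^{(α−β)τ})/(β−α). With f(0) = √((β+α)² − 4αβ) = β−α and g(u,0) = β + α(1 − 2e^{iu}), the characteristic function formula at v = 0, ψ(u) = e^{(λ*τ/(2α))(β−α−f(0))} (2f(0)/(f(0)+g(u,0)+e^{−τf(0)}(f(0)−g(u,0))))^{λ*/α} · (((1−e^{−τf(0)})(2β−e^{iu}(β+α)) + e^{iu}f(0)(1+e^{−τf(0)})) / (f(0)+g(u,0)+e^{−τf(0)}(f(0)−g(u,0))))^{Q_s}, simplifies to ψ(u) = (p(τ)/(1−(1−p(τ))e^{iu}))^{λ_s/α} (e^{iu}(1−g(τ)) + g(τ))^{Q_s} with λ_s = λ* + αQ_s. -/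
open Real

theorem stmt10 (α β lam τ : ℝ) (hα : 0 < α) (hβ : 0 < β) (hβα : α < β) (hlam : 0 ≤ lam)
    (hτ : 0 < τ) (Qs : ℕ) (u : ℝ) (p g f0 : ℝ)
    (hp : p = (β - α) / (β - α * Real.exp ((α - β) * τ)))
    (hg : g = β * (1 - Real.exp ((α - β) * τ)) / (β - α))
    (hf0 : f0 = β - α)
    (g0 D : ℂ)
    (hg0 : g0 = (β : ℂ) + α * (1 - 2 * Complex.exp (Complex.I * u)))
    (hD : D = (f0 : ℂ) + g0 + (Real.exp (-(τ * f0)) : ℂ) * ((f0 : ℂ) - g0))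
    (hDne : D ≠ 0) :
    Complex.exp ((lam * τ / (2 * α) * (β - α - f0) : ℝ)) *
      (2 * (f0 : ℂ) / D) ^ ((lam / α : ℝ) : ℂ) *
      ((((1 - Real.exp (-(τ * f0))) : ℝ) * (2 * (β : ℂ) - Complex.exp (Complex.I * u) * ((β : ℂ) + α))
          + Complex.exp (Complex.I * u) * (f0 : ℂ) * ((1 + Real.exp (-(τ * f0)) : ℝ) : ℂ)) / D) ^ Qs
    = ((p : ℂ) / (1 - (1 - (p : ℂ)) * Complex.exp (Complex.I * u))) ^ (((lam + α * Qs) / α : ℝ) : ℂ) *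
        (Complex.exp (Complex.I * u) * (1 - (g : ℂ)) + (g : ℂ)) ^ Qs := by
  set E : ℝ := Real.exp ((α - β) * τ) with hE
  set e : ℂ := Complex.exp (Complex.I * u) with he
  have hEf : Real.exp (-(τ * f0)) = E := by rw [hf0, hE]; ring_nf
  have hE1 : E < 1 := by
    apply Real.exp_lt_one_iff.mpr
    nlinarith
  have hE0 : 0 < E := Real.exp_pos _
  have hβα' : (0:ℝ) < β - α := by linarith
  have hden : (0:ℝ) < β - α * E := by nlinarith
  have hdenC : ((β:ℂ) - α * E) ≠ 0 := by
    exact_mod_cast (Complex.ofReal_ne_zero.mpr (ne_of_gt hden))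
  have hβαC : ((β:ℂ) - α) ≠ 0 := by
    exact_mod_cast (Complex.ofReal_ne_zero.mpr (ne_of_gt hβα'))
  -- rewrite D
  have hD' : D = 2 * ((β - α * E : ℂ) - α * (1 - E) * e) := by
    rw [hD, hg0, hEf, hf0]
    push_cast
    ring
  -- key identity: p / (1 - (1-p) e) = 2 f0 / D
  have hpC : (p : ℂ) = ((β:ℂ) - α) / ((β:ℂ) - α * E) := by
    rw [hp]; push_cast [hE]; ring_nf
  have hDne' : ((β:ℂ) - α * E) - α * (1 - E) * e ≠ 0 := by
    intro h
    apply hDne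
    rw [hD', h, mul_zero]
  have h1 : (1:ℂ) - (1 - (p:ℂ)) * e = D / (2 * ((β:ℂ) - α * E)) := by
    rw [hpC, hD']
    field_simp [hdenC]
    ring
  have hZ : (p : ℂ) / (1 - (1 - (p:ℂ)) * e) = 2 * (f0:ℂ) / D := by
    rw [h1, hpC, hf0, div_div_eq_mul_div]
    push_cast
    congr 1
    field_simp [hdenC]
  have hZne : 2 * (f0:ℂ) / D ≠ 0 := by
    apply div_ne_zero _ hDne
    rw [hf0]
    simpa using hβαC
  -- g cast
  have hgC : (g : ℂ) = (β:ℂ) * (1 - E) / ((β:ℂ) - α) := by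
    rw [hg]; push_cast [hE]; ring_nf
  -- numerator identity
  have hN : (((1 - Real.exp (-(τ * f0))) : ℝ) * (2 * (β : ℂ) - e * ((β : ℂ) + α))
          + e * (f0 : ℂ) * ((1 + Real.exp (-(τ * f0)) : ℝ) : ℂ))
      = (e * (1 - (g:ℂ)) + (g:ℂ)) * (2 * (f0:ℂ)) := by
    rw [hEf, hf0, hgC]
    push_cast
    field_simp [hβαC]
    ring
  have hNdiv : ((((1 - Real.exp (-(τ * f0))) : ℝ) * (2 * (β : ℂ) - e * ((β : ℂ) + α))
          + e * (f0 : ℂ) * ((1 + Real.exp (-(τ * f0)) : ℝ) : ℂ)) / D)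
      = (e * (1 - (g:ℂ)) + (g:ℂ)) * (2 * (f0:ℂ) / D) := by
    rw [hN]; ring
  -- exponent split
  have hexp : (((lam + α * Qs) / α : ℝ) : ℂ) = ((lam / α : ℝ) : ℂ) + (Qs : ℂ) := by
    have hr : ((lam + α * Qs) / α : ℝ) = lam / α + Qs := by
      field_simp
    rw [hr]
    push_cast
    ring
  have hone : Complex.exp ((lam * τ / (2 * α) * (β - α - f0) : ℝ)) = 1 := by
    have h0 : (lam * τ / (2 * α) * (β - α - f0) : ℝ) = 0 := by rw [hf0]; ring
    rw [h0, Complex.ofReal_zero, Complex.exp_zero]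
  rw [hone, hZ, hexp, hNdiv, one_mul, mul_pow,
    Complex.cpow_add _ _ hZne, Complex.cpow_natCast]
  ring
end
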